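/- arXiv:math/0111302 — 2 statements merged into one kernel-verified Lean document; each statement's English description precedes it below -/
import Mathlib

section
/- If Δ is a (d-1)-dimensional Buchsbaum simplicial complex (every vertex link is Cohen–Macaulay, hence has non-negative h-vector), then the alternating Euler characteristics of skeleta satisfy (-1)^i χ_i(Δ) ≥ 0 for all 0 ≤ i ≤ ⌊(d-1)/2⌋, where χ_i(Δ) = ∑_{j=0}^{i} (-1)^j f_j(Δ). -/
/-!
Write `D = d - 1`. Every `j`-face of `Δ` arises from exactly `j + 1` pairs `(v, F)` with `F` a
`(j-1)`-face of `lk v`, so `(j + 1) f_j(Δ) = ∑_v f_{j-1}(lk v)`. Inverting the definition of the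
`h`-vector of each link, `f_{j-1}(L) = ∑_{k ≤ j} C(D-k, D-j) h_k(L)`, turns this into
`(-1)^i χ_i(Δ) = ∑_{k ≤ i} c_k ∑_v h_k(lk v)` with `c_k = ∑_{j=k}^{i} (-1)^(i-j) C(D-k, D-j)/(j+1)`.
When `2i ≤ D` the terms `C(D-k, D-j)/(j+1)` increase with `j`, so each `c_k`, an alternating sum
ending in its largest term, is non-negative.
-/

open Finset

structure SC (V : Type*) [DecidableEq V] where
  faces : Finset (Finset V)
  empty_mem : ∅ ∈ faces
  down_closed : ∀ F ∈ faces, ∀ G ⊆ F, G ∈ faces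

variable {V : Type*} [DecidableEq V] [Fintype V]

def link (S : Finset (Finset V)) (v : V) : Finset (Finset V) :=
  S.filter fun F => v ∉ F ∧ insert v F ∈ S

/-- `fnum S m` is the number of faces of cardinality `m`, i.e. `f_{m-1}`. -/
def fnum (S : Finset (Finset V)) (m : ℕ) : ℕ := (S.filter fun F => F.card = m).card

/-- A complex is pure of dimension `d-1` if every face is contained in a face with `d` vertices. -/
def IsPure (S : Finset (Finset V)) (d : ℕ) : Prop :=
  ∀ F ∈ S, ∃ G ∈ S, F ⊆ G ∧ G.card = d

/-- The `h`-numbers of a complex `S` of dimension `D - 1`: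
`h_i = ∑_{j=0}^i (-1)^{i-j} C(D-j, D-i) f_{j-1}`. -/
def hnum (D : ℕ) (S : Finset (Finset V)) (i : ℕ) : ℚ :=
  ∑ j ∈ Finset.range (i + 1),
    (-1 : ℚ) ^ (i - j) * ((D - j).choose (D - i) : ℚ) * (fnum S j : ℚ)

section AlternatingSum

variable {R : Type*} [CommRing R] [LinearOrder R] [IsStrictOrderedRing R]

theorem alternating_sum_Icc_nonneg_and_le {u : ℕ → R} {a b : ℕ} (hab : a ≤ b) (ha : 0 ≤ u a)
    (hu : ∀ j, a ≤ j → j < b → u j ≤ u (j + 1)) :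
    0 ≤ ∑ j ∈ Icc a b, (-1) ^ (b - j) * u j ∧ ∑ j ∈ Icc a b, (-1) ^ (b - j) * u j ≤ u b := by
  induction b, hab using Nat.le_induction with
  | base => simpa using ha
  | succ b hab ih =>
    obtain ⟨ih_nonneg, ih_le⟩ := ih fun j hj hjb => hu j hj (by omega)
    have hstep : ∑ j ∈ Icc a (b + 1), (-1) ^ (b + 1 - j) * u j
        = u (b + 1) - ∑ j ∈ Icc a b, (-1) ^ (b - j) * u j := by
      rw [sum_Icc_succ_top (by omega), Nat.sub_self, pow_zero, one_mul, sub_eq_neg_add,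
        ← sum_neg_distrib]
      congr 1
      refine sum_congr rfl fun j hj => ?_
      rw [Nat.sub_add_comm (mem_Icc.mp hj).2, pow_succ]
      ring
    have hmono := hu b hab (by omega)
    constructor <;> linarith

end AlternatingSum

section BinomialInversion

variable {R : Type*} [CommRing R]

theorem sum_Icc_neg_one_pow_mul_choose_mul_choose {D l j : ℕ} (hlj : l ≤ j) (hj : j ≤ D) :
    ∑ k ∈ Icc l j, (-1 : R) ^ (k - l) * ((D - l).choose (D - k) * (D - k).choose (D - j) : ℕ)
      = if l = j then 1 else 0 := by
  have hfactor : ∀ k ∈ Icc l j, (D - l).choose (D - k) * (D - k).choose (D - j)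
      = (D - l).choose (D - j) * (j - l).choose (k - l) := by
    intro k hk
    obtain ⟨hlk, hkj⟩ := mem_Icc.mp hk
    rw [Nat.choose_mul (by omega), show D - l - (D - j) = j - l by omega,
      Nat.choose_symm_of_eq_add (show j - l = (D - k - (D - j)) + (k - l) by omega)]
  rw [sum_congr rfl fun k hk => by rw [hfactor k hk], ← Ico_add_one_right_eq_Icc,
    sum_Ico_eq_sum_range]
  have halt := congrArg (Int.cast : ℤ → R) (Int.alternating_sum_range_choose (n := j - l))
  push_cast at halt
  simp only [Nat.cast_mul, add_tsub_cancel_left, mul_left_comm _ ((D - l).choose (D - j) : R),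
    ← mul_sum, show j + 1 - l = j - l + 1 by omega, halt]
  by_cases hl : l = j
  · subst hl; simp
  · rw [if_neg (by omega), if_neg hl, mul_zero]

theorem sum_choose_mul_sum_neg_one_pow_choose_mul (D : ℕ) (f : ℕ → R) {j : ℕ} (hj : j ≤ D) :
    ∑ k ∈ range (j + 1), ((D - k).choose (D - j) : R) *
      ∑ l ∈ range (k + 1), (-1) ^ (k - l) * ((D - l).choose (D - k) : R) * f l = f j := by
  simp_rw [mul_sum]
  rw [sum_comm' (t' := range (j + 1)) (s' := fun l => Icc l j)
    (by intro k l; simp only [mem_range, mem_Icc]; omega)]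
  have hinner : ∀ l ∈ range (j + 1), ∑ k ∈ Icc l j,
      ((D - k).choose (D - j) : R) * ((-1) ^ (k - l) * ((D - l).choose (D - k) : R) * f l)
      = if l = j then f l else 0 := by
    intro l hl
    rw [show (if l = j then f l else 0) = (if l = j then 1 else 0) * f l by split_ifs <;> simp,
      ← sum_Icc_neg_one_pow_mul_choose_mul_choose (by simpa [Nat.lt_succ_iff] using hl) hj,
      sum_mul]
    refine sum_congr rfl fun k _ => ?_
    push_cast
    ring
  rw [sum_congr rfl hinner, sum_ite_eq' _ _ _, if_pos (self_mem_range_succ j)]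

end BinomialInversion

omit [DecidableEq V] [Fintype V] in
theorem fnum_eq_sum_choose_mul_hnum (S : Finset (Finset V)) {D j : ℕ} (hj : j ≤ D) :
    (fnum S j : ℚ) = ∑ k ∈ range (j + 1), ((D - k).choose (D - j) : ℚ) * hnum D S k :=
  (sum_choose_mul_sum_neg_one_pow_choose_mul D (fun l => (fnum S l : ℚ)) hj).symm

omit [Fintype V] in
theorem fnum_link_eq_card_filter_mem (Δ : SC V) (v : V) (j : ℕ) :
    fnum (link Δ.faces v) j = #{G ∈ Δ.faces | G.card = j + 1 ∧ v ∈ G} := by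
  refine card_nbij' (insert v) (fun G => G.erase v) ?_ ?_ ?_ ?_
  · intro F hF
    simp only [coe_filter, link, mem_filter, Set.mem_ofPred_eq] at hF ⊢
    obtain ⟨⟨-, hvF, hvF_mem⟩, rfl⟩ := hF
    exact ⟨hvF_mem, card_insert_of_notMem hvF, mem_insert_self v F⟩
  · intro G hG
    simp only [coe_filter, link, mem_filter, Set.mem_ofPred_eq] at hG ⊢
    obtain ⟨hG_mem, hcard, hvG⟩ := hG
    refine ⟨⟨Δ.down_closed G hG_mem _ (erase_subset v G), notMem_erase v G, ?_⟩, ?_⟩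
    · rwa [insert_erase hvG]
    · rw [card_erase_of_mem hvG, hcard, Nat.add_sub_cancel]
  · intro F hF
    simp only [coe_filter, link, mem_filter, Set.mem_ofPred_eq] at hF
    exact erase_insert hF.1.2.1
  · intro G hG
    simp only [coe_filter, Set.mem_ofPred_eq] at hG
    exact insert_erase hG.2.2

theorem sum_fnum_link (Δ : SC V) (j : ℕ) :
    ∑ v, fnum (link Δ.faces v) j = (j + 1) * fnum Δ.faces (j + 1) := by
  simp_rw [fnum_link_eq_card_filter_mem, ← filter_filter]
  refine (sum_card_bipartiteAbove_eq_sum_card_bipartiteBelow (s := univ)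
    (fun v G => v ∈ G)).trans ?_
  simp only [bipartiteBelow, filter_mem_eq_inter, univ_inter, fnum]
  rw [sum_congr rfl fun G hG => (mem_filter.mp hG).2, sum_const, smul_eq_mul, mul_comm]

theorem succ_mul_fnum_succ_eq_sum_choose_mul_sum_hnum (Δ : SC V) {D j : ℕ} (hj : j ≤ D) :
    ((j + 1) * fnum Δ.faces (j + 1) : ℚ)
      = ∑ k ∈ range (j + 1), ((D - k).choose (D - j) : ℚ) * ∑ v, hnum D (link Δ.faces v) k := by
  rw [← Nat.cast_succ, ← Nat.cast_mul, ← sum_fnum_link, Nat.cast_sum]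
  simp_rw [fnum_eq_sum_choose_mul_hnum _ hj, mul_sum]
  exact sum_comm

def eulerWeight (D i k : ℕ) : ℚ :=
  ∑ j ∈ Icc k i, (-1) ^ (i - j) * (((D - k).choose (D - j) : ℚ) / (j + 1))

theorem neg_one_pow_mul_sum_fnum_eq_sum_eulerWeight_mul (Δ : SC V) {D i : ℕ} (hi : i ≤ D) :
    (-1 : ℚ) ^ i * ∑ j ∈ range (i + 1), (-1) ^ j * (fnum Δ.faces (j + 1) : ℚ)
      = ∑ k ∈ range (i + 1), eulerWeight D i k * ∑ v, hnum D (link Δ.faces v) k := by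
  have hterm : ∀ j ∈ range (i + 1), (-1 : ℚ) ^ i * ((-1) ^ j * (fnum Δ.faces (j + 1) : ℚ))
      = ∑ k ∈ range (j + 1), (-1) ^ (i - j) * (((D - k).choose (D - j) : ℚ) / (j + 1)) *
          ∑ v, hnum D (link Δ.faces v) k := by
    intro j hj
    have hji : j ≤ i := Nat.lt_succ_iff.mp (mem_range.mp hj)
    have hsign : (-1 : ℚ) ^ i * (-1) ^ j = (-1) ^ (i - j) := by
      rw [← Nat.sub_add_cancel hji, pow_add, mul_assoc, ← pow_add, Even.neg_one_pow ⟨j, rfl⟩,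
        mul_one, Nat.add_sub_cancel]
    have hf : (fnum Δ.faces (j + 1) : ℚ) = (∑ k ∈ range (j + 1), ((D - k).choose (D - j) : ℚ) *
        ∑ v, hnum D (link Δ.faces v) k) / (j + 1) := by
      rw [← succ_mul_fnum_succ_eq_sum_choose_mul_sum_hnum Δ (hji.trans hi)]
      field_simp
    rw [← mul_assoc, hsign, hf, mul_div_assoc', mul_sum, sum_div]
    refine sum_congr rfl fun k _ => ?_
    ring
  rw [mul_sum, sum_congr rfl hterm,
    sum_comm' (t' := range (i + 1)) (s' := fun k => Icc k i)
      (by intro j k; simp only [mem_range, mem_Icc]; omega)]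
  simp_rw [eulerWeight, sum_mul]

theorem choose_div_succ_le_choose_div_succ {D k j : ℕ} (hkj : k ≤ j) (hj : 2 * (j + 1) ≤ D) :
    ((D - k).choose (D - j) : ℚ) / (j + 1) ≤ ((D - k).choose (D - (j + 1)) : ℚ) / (j + 1 + 1) := by
  set s := D - (j + 1)
  have hs : D - j = s + 1 := by omega
  have hnat : (D - k).choose (s + 1) * (j + 2) ≤ (D - k).choose s * (j + 1) := by
    refine Nat.le_of_mul_le_mul_right (c := s + 1) ?_ (Nat.succ_pos s)
    calc (D - k).choose (s + 1) * (j + 2) * (s + 1)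
        = (D - k).choose s * ((D - k - s) * (j + 2)) := by
          rw [mul_right_comm, Nat.choose_succ_right_eq, mul_assoc]
      _ ≤ (D - k).choose s * ((j + 1) * (s + 1)) :=
          Nat.mul_le_mul_left _ (Nat.mul_le_mul (by omega) (by omega))
      _ = (D - k).choose s * (j + 1) * (s + 1) := by ring
  rw [hs, div_le_div_iff₀ (by positivity) (by positivity)]
  exact_mod_cast hnat

theorem eulerWeight_nonneg {D i : ℕ} (k : ℕ) (hi : 2 * i ≤ D) : 0 ≤ eulerWeight D i k := by
  rcases lt_or_ge i k with hik | hki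
  · simp [eulerWeight, Icc_eq_empty_of_lt hik]
  · refine (alternating_sum_Icc_nonneg_and_le
      (u := fun j => ((D - k).choose (D - j) : ℚ) / (j + 1)) hki (by positivity)
      fun j hkj hji => ?_).1
    simpa using choose_div_succ_le_choose_div_succ hkj (by omega)

theorem statement4_general (d : ℕ) (Δ : SC V)
    (hCM : ∀ v : V, ∀ i ≤ d - 1, 0 ≤ hnum (d - 1) (link Δ.faces v) i) :
    ∀ i ≤ (d - 1) / 2,
      0 ≤ (-1 : ℚ) ^ i * ∑ j ∈ Finset.range (i + 1), (-1 : ℚ) ^ j * (fnum Δ.faces (j + 1) : ℚ) := by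
  intro i hi
  have hiD : 2 * i ≤ d - 1 := by omega
  rw [neg_one_pow_mul_sum_fnum_eq_sum_eulerWeight_mul Δ (D := d - 1) (by omega)]
  exact sum_nonneg fun k hk => mul_nonneg (eulerWeight_nonneg k hiD)
    (sum_nonneg fun v _ => hCM v k (by simp only [mem_range] at hk; omega))

/-- if every vertex link of the pure (d-1)-dimensional complex Δ has a
non-negative h-vector (e.g. Δ is Buchsbaum), then (-1)^i χ_i(Δ) ≥ 0 for 0 ≤ i ≤ ⌊(d-1)/2⌋. -/
theorem statement4 (d : ℕ) (Δ : SC V) (hpure : IsPure Δ.faces d)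
    (hCM : ∀ v : V, ∀ i ≤ d - 1, 0 ≤ hnum (d - 1) (link Δ.faces v) i) :
    ∀ i ≤ (d - 1) / 2,
      0 ≤ (-1 : ℚ) ^ i * ∑ j ∈ Finset.range (i + 1), (-1 : ℚ) ^ j * (fnum Δ.faces (j + 1) : ℚ) :=
  statement4_general d Δ hCM
end

section
/- For a pure (2k+1)-dimensional simplicial complex Δ and any 0 ≤ r ≤ 2k+2, the ordinary h-number h_r(Δ) can be expressed in terms of the short simplicial h-numbers as h_r(Δ) = (-1)^r C(2k+2, r) + ∑_{i=0}^{r-1} h̃_i(Δ) · C(2k+1-i, 2k+2-r) · ∑_{j=i+1}^{r} (1/j)(-1)^{r-j} C(r-i-1, r-j). -/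
open Finset

variable {V : Type*} [DecidableEq V] [Fintype V]

/-!
Counting pairs `(v, F)` with `F` a face of `lk v` in two ways gives
`j · f_{j-1}(Δ) = ∑_v f_{j-2}(lk v)`, and inverting the binomial transform that defines the
`h`-vector of each link writes the right side as `∑_{i<j} C(2k+1-i, 2k+2-j) h̃_i(Δ)`.
Substituting this into the definition of `h_r(Δ)` and exchanging the sums, the identity
`C(a, b) C(b, c) = C(a, c) C(a - c, b - c)` collects the coefficient of each `h̃_i(Δ)`.
-/

lemma sum_fnum_link_s10 (S : Finset (Finset V)) (hdc : ∀ F ∈ S, ∀ G ⊆ F, G ∈ S) (m : ℕ) :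
    ∑ v : V, fnum (link S v) m = (m + 1) * fnum S (m + 1) := by
  have hL : ∑ v : V, fnum (link S v) m
      = (univ.sigma fun v => (link S v).filter fun F => F.card = m).card := by
    rw [card_sigma]; rfl
  have hR : (m + 1) * fnum S (m + 1)
      = ((S.filter fun G => G.card = m + 1).sigma fun G => G).card := by
    rw [card_sigma, sum_congr rfl fun G hG => (mem_filter.mp hG).2, sum_const, smul_eq_mul,
      Nat.mul_comm]
    rfl
  rw [hL, hR]
  refine card_bij' (fun p _ => ⟨insert p.1 p.2, p.1⟩) (fun q _ => ⟨q.2, q.1.erase q.2⟩)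
    ?_ ?_ ?_ ?_ <;>
    simp only [mem_sigma, mem_filter, link, mem_univ, true_and]
  · rintro ⟨v, F⟩ ⟨⟨-, hvF, hins⟩, hcard⟩
    exact ⟨⟨hins, by rw [card_insert_of_notMem hvF, hcard]⟩, mem_insert_self _ _⟩
  · rintro ⟨G, v⟩ ⟨⟨hGS, hcard⟩, hvG⟩
    refine ⟨⟨hdc G hGS _ (erase_subset _ _), notMem_erase _ _, by rwa [insert_erase hvG]⟩,
      ?_⟩
    rw [card_erase_of_mem hvG, hcard, Nat.add_sub_cancel]
  · rintro ⟨v, F⟩ ⟨⟨-, hvF, -⟩, -⟩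
    simp [erase_insert hvF]
  · rintro ⟨G, v⟩ ⟨-, hvG⟩
    simp [insert_erase hvG]

lemma sum_Icc_neg_one_pow_mul_choose {j m : ℕ} (hjm : j ≤ m) :
    ∑ i ∈ Icc j m, (-1 : ℚ) ^ (i - j) * ((m - j).choose (m - i) : ℚ)
      = if j = m then 1 else 0 := by
  obtain ⟨d, rfl⟩ := Nat.exists_eq_add_of_le hjm
  have hrange :
      ∑ i ∈ Icc j (j + d), (-1 : ℚ) ^ (i - j) * ((j + d - j).choose (j + d - i) : ℚ)
      = ∑ t ∈ range (d + 1), (-1 : ℚ) ^ t * (d.choose t : ℚ) := by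
    rw [← Ico_add_one_right_eq_Icc, sum_Ico_eq_sum_range, show j + d + 1 - j = d + 1 by omega]
    refine sum_congr rfl fun t ht => ?_
    rw [Nat.add_sub_cancel_left, Nat.add_sub_cancel_left, Nat.add_sub_add_left,
      Nat.choose_symm (Nat.lt_succ_iff.mp (mem_range.mp ht))]
  rw [hrange]
  exact_mod_cast (Int.alternating_sum_range_choose (n := d)).trans (by simp)

lemma choose_sub_mul_choose_sub {D a b c : ℕ} (hab : a ≤ b) (hbc : b ≤ c) (hcD : c ≤ D) :
    (D - a).choose (D - b) * (D - b).choose (D - c)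
      = (D - a).choose (D - c) * (c - a).choose (c - b) := by
  rw [Nat.choose_mul (by omega), show D - a - (D - c) = c - a by omega,
    show D - b - (D - c) = c - b by omega]

omit [DecidableEq V] [Fintype V] in
lemma fnum_eq_sum_hnum (D : ℕ) (S : Finset (Finset V)) {m : ℕ} (hm : m ≤ D) :
    (fnum S m : ℚ) = ∑ i ∈ range (m + 1), ((D - i).choose (D - m) : ℚ) * hnum D S i := by
  simp_rw [hnum, mul_sum]
  rw [sum_comm' (t' := range (m + 1)) (s' := fun j => Icc j m) (by
    intro i j; simp only [mem_range, mem_Icc]; omega)]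
  have inner : ∀ j ∈ range (m + 1), ∑ i ∈ Icc j m, ((D - i).choose (D - m) : ℚ) *
        ((-1 : ℚ) ^ (i - j) * ((D - j).choose (D - i) : ℚ) * (fnum S j : ℚ))
      = if j = m then (fnum S j : ℚ) else 0 := by
    intro j hj
    have hjm : j ≤ m := Nat.lt_succ_iff.mp (mem_range.mp hj)
    calc _ = ((D - j).choose (D - m) : ℚ) * (fnum S j : ℚ) *
          ∑ i ∈ Icc j m, (-1 : ℚ) ^ (i - j) * ((m - j).choose (m - i) : ℚ) := by
          rw [mul_sum]
          refine sum_congr rfl fun i hi => ?_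
          obtain ⟨hji, him⟩ := mem_Icc.mp hi
          have := congrArg (Nat.cast : ℕ → ℚ) (choose_sub_mul_choose_sub hji him hm)
          push_cast at this
          linear_combination (-1 : ℚ) ^ (i - j) * (fnum S j : ℚ) * this
      _ = _ := by
          rw [sum_Icc_neg_one_pow_mul_choose hjm]
          split_ifs with h
          · subst h; simp
          · simp
  rw [sum_congr rfl inner, sum_ite_eq' _ _ (fun j => (fnum S j : ℚ)),
    if_pos (self_mem_range_succ m)]

/-- The short simplicial `h`-vector `h̃`. -/
def shortHnum (n : ℕ) (S : Finset (Finset V)) (i : ℕ) : ℚ :=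
  ∑ v : V, hnum n (link S v) i

lemma mul_fnum_eq_sum_shortHnum (S : Finset (Finset V)) (hdc : ∀ F ∈ S, ∀ G ⊆ F, G ∈ S)
    {n j : ℕ} (hj : 1 ≤ j) (hjn : j ≤ n + 1) :
    (j : ℚ) * fnum S j
      = ∑ i ∈ range j, ((n - i).choose (n + 1 - j) : ℚ) * shortHnum n S i := by
  obtain ⟨m, rfl⟩ := Nat.exists_eq_add_of_le' hj
  rw [show n + 1 - (m + 1) = n - m by omega]
  calc ((m + 1 : ℕ) : ℚ) * fnum S (m + 1)
      = ∑ v : V, (fnum (link S v) m : ℚ) := by exact_mod_cast (sum_fnum_link_s10 S hdc m).symm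
    _ = ∑ v : V, ∑ i ∈ range (m + 1), ((n - i).choose (n - m) : ℚ) * hnum n (link S v) i :=
        sum_congr rfl fun v _ => fnum_eq_sum_hnum n (link S v) (by omega)
    _ = _ := by rw [sum_comm]; simp_rw [shortHnum, mul_sum]

lemma sum_Icc_neg_one_pow_choose_mul_eq {n r : ℕ} (hr : r ≤ n + 1) (f H : ℕ → ℚ)
    (hf : ∀ j ∈ Icc 1 r,
      (j : ℚ) * f j = ∑ i ∈ range j, ((n - i).choose (n + 1 - j) : ℚ) * H i) :
    ∑ j ∈ Icc 1 r, (-1 : ℚ) ^ (r - j) * ((n + 1 - j).choose (n + 1 - r) : ℚ) * f j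
      = ∑ i ∈ range r, H i * ((n - i).choose (n + 1 - r) : ℚ) *
          ∑ j ∈ Icc (i + 1) r,
            (1 / (j : ℚ)) * (-1 : ℚ) ^ (r - j) * ((r - i - 1).choose (r - j) : ℚ) := by
  have hf' : ∀ j ∈ Icc 1 r,
      f j = ∑ i ∈ range j, (1 / (j : ℚ)) * ((n - i).choose (n + 1 - j) : ℚ) * H i := by
    intro j hj
    have hj0 : (j : ℚ) ≠ 0 := by exact_mod_cast (Nat.one_le_iff_ne_zero.mp (mem_Icc.mp hj).1)
    simp_rw [mul_assoc, ← mul_sum, ← hf j hj]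
    field_simp
  rw [sum_congr rfl fun j hj => by rw [hf' j hj, mul_sum]]
  rw [sum_comm' (t' := range r) (s' := fun i => Icc (i + 1) r) (by
    intro j i; simp only [mem_range, mem_Icc]; omega)]
  refine sum_congr rfl fun i _ => ?_
  rw [mul_sum]
  refine sum_congr rfl fun j hj => ?_
  obtain ⟨hij, hjr⟩ := mem_Icc.mp hj
  have key := congrArg (Nat.cast : ℕ → ℚ) (choose_sub_mul_choose_sub (D := n + 1) hij hjr hr)
  rw [show n + 1 - (i + 1) = n - i by omega, show r - (i + 1) = r - i - 1 by omega] at key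
  push_cast at key
  linear_combination (1 / (j : ℚ)) * (-1 : ℚ) ^ (r - j) * H i * key

omit [Fintype V] in
lemma SC.fnum_zero (Δ : SC V) : fnum Δ.faces 0 = 1 := by
  rw [fnum, card_eq_one]
  exact ⟨∅, by ext F; simpa [card_eq_zero] using fun h => h ▸ Δ.empty_mem⟩

omit [DecidableEq V] [Fintype V] in
lemma hnum_eq_add_sum_Icc (D : ℕ) (S : Finset (Finset V)) (r : ℕ) :
    hnum D S r = (-1 : ℚ) ^ r * (D.choose (D - r) : ℚ) * fnum S 0 +
      ∑ j ∈ Icc 1 r, (-1 : ℚ) ^ (r - j) * ((D - j).choose (D - r) : ℚ) * fnum S j := by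
  rw [hnum, sum_range_eq_add_Ico _ (Nat.add_one_pos r), Ico_add_one_right_eq_Icc, Nat.sub_zero,
    Nat.sub_zero]

theorem hnum_eq_sum_shortHnum (Δ : SC V) {n r : ℕ} (hr : r ≤ n + 1) :
    hnum (n + 1) Δ.faces r = (-1 : ℚ) ^ r * ((n + 1).choose r : ℚ) +
      ∑ i ∈ range r, shortHnum n Δ.faces i * ((n - i).choose (n + 1 - r) : ℚ) *
        ∑ j ∈ Icc (i + 1) r,
          (1 / (j : ℚ)) * (-1 : ℚ) ^ (r - j) * ((r - i - 1).choose (r - j) : ℚ) := by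
  rw [hnum_eq_add_sum_Icc, Δ.fnum_zero, Nat.choose_symm hr, Nat.cast_one, mul_one]
  congr 1
  exact sum_Icc_neg_one_pow_choose_mul_eq hr _ _ fun j hj =>
    mul_fnum_eq_sum_shortHnum Δ.faces Δ.down_closed (mem_Icc.mp hj).1 ((mem_Icc.mp hj).2.trans hr)

theorem statement10_general (k : ℕ) (Δ : SC V)
    (r : ℕ) (hr : r ≤ 2 * k + 2) :
    hnum (2 * k + 2) Δ.faces r
      = (-1 : ℚ) ^ r * ((2 * k + 2).choose r : ℚ) +
        ∑ i ∈ Finset.range r,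
          (∑ v : V, hnum (2 * k + 1) (link Δ.faces v) i) *
            ((2 * k + 1 - i).choose (2 * k + 2 - r) : ℚ) *
            ∑ j ∈ Finset.Icc (i + 1) r,
              (1 / (j : ℚ)) * (-1 : ℚ) ^ (r - j) * ((r - i - 1).choose (r - j) : ℚ) :=
  hnum_eq_sum_shortHnum Δ hr

/-- for a pure (2k+1)-dimensional complex Δ and 0 ≤ r ≤ 2k+2,
h_r(Δ) = (-1)^r C(2k+2, r)
       + ∑_{i=0}^{r-1} h̃_i(Δ) C(2k+1-i, 2k+2-r) ∑_{j=i+1}^{r} (1/j)(-1)^{r-j} C(r-i-1, r-j). -/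
theorem statement10 (k : ℕ) (Δ : SC V) (hpure : IsPure Δ.faces (2 * k + 2))
    (r : ℕ) (hr : r ≤ 2 * k + 2) :
    hnum (2 * k + 2) Δ.faces r
      = (-1 : ℚ) ^ r * ((2 * k + 2).choose r : ℚ) +
        ∑ i ∈ Finset.range r,
          (∑ v : V, hnum (2 * k + 1) (link Δ.faces v) i) *
            ((2 * k + 1 - i).choose (2 * k + 2 - r) : ℚ) *
            ∑ j ∈ Finset.Icc (i + 1) r,
              (1 / (j : ℚ)) * (-1 : ℚ) ^ (r - j) * ((r - i - 1).choose (r - j) : ℚ) :=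
  statement10_general k Δ r hr
end
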